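/- arXiv:1102.2498 — 8 statements merged into one kernel-verified Lean document; each statement's English description precedes it below -/
import Mathlib

section
/- Let G be a two-unicast layered network and let P_11 (from s_1 to d_1) and P_22 (from s_2 to d_2) be disjoint paths. Fix i in {1,2} and suppose that, for the pair (P_11,P_22), at least two nodes cause interference on P_ii, i.e. n_i(G[V]) >= 2. Let v_p be the first node along P_ii such that every path from s_{i'} to d_i contains v_p (such a node exists since d_i itself has this property). Then there exist a path R from s_1 to v_p and a path R' from s_2 to v_p whose intersection is exactly {v_p}. -/
open List

/-- `IsPath E p u w` : the nonempty list `p` of vertices is a directed path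
from `u` to `w` with respect to the edge relation `E`. -/
def IsPath {V : Type*} (E : V → V → Prop) (p : List V) (u w : V) : Prop :=
  p ≠ [] ∧ p.head? = some u ∧ p.getLast? = some w ∧ p.Chain' E

/-- `Reaches E u w` (written `u ~> w`) : there is a directed path from `u` to `w`. -/
def Reaches {V : Type*} (E : V → V → Prop) (u w : V) : Prop :=
  ∃ p, IsPath E p u w

/-- A two-unicast layered network: a finite directed graph, with two sources
`s1, s2` and two destinations `d1, d2` (all four distinct), vertices partitioned
into layers `1, ..., r` such that every edge goes from a layer to the next one,
the first layer is `{s1, s2}`, the last layer is `{d1, d2}`, and each source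
reaches its corresponding destination. -/
structure TwoUnicastNetwork (V : Type*) [Fintype V] where
  E : V → V → Prop
  s1 : V
  s2 : V
  d1 : V
  d2 : V
  r : ℕ
  layer : V → ℕ
  layer_pos : ∀ v, 1 ≤ layer v
  layer_le : ∀ v, layer v ≤ r
  edge_layer : ∀ u w, E u w → layer w = layer u + 1
  s_ne : s1 ≠ s2
  d_ne : d1 ≠ d2
  sd_ne : ∀ s d, (s = s1 ∨ s = s2) → (d = d1 ∨ d = d2) → s ≠ d
  first_layer : ∀ v, layer v = 1 ↔ v = s1 ∨ v = s2
  last_layer : ∀ v, layer v = r ↔ v = d1 ∨ v = d2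
  conn1 : Reaches E s1 d1
  conn2 : Reaches E s2 d2

/-- `InterferesOn N S Ri srcOther v` : within the induced subgraph `G[S]`, the
node `v` causes interference on the path `Ri` : `v ∈ S`, `v ∉ Ri`, there is an
edge (inside `G[S]`) from `v` into a node of `Ri`, and there is a path from the
other source `srcOther` to `v` lying inside `G[S]` and disjoint from `Ri`. -/
def InterferesOn {V : Type*} [Fintype V] (N : TwoUnicastNetwork V) (S : Set V)
    (Ri : List V) (srcOther : V) (v : V) : Prop :=
  v ∈ S ∧ v ∉ Ri ∧ (∃ w ∈ Ri, w ∈ S ∧ N.E v w) ∧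
    ∃ q, IsPath N.E q srcOther v ∧ (∀ x ∈ q, x ∈ S) ∧ ∀ x ∈ q, x ∉ Ri

/-- `n_i(G[S])` : the number of nodes causing interference on `Ri` within the
induced subgraph `G[S]`, the interfering path coming from `srcOther`. -/
noncomputable def nInterf {V : Type*} [Fintype V] (N : TwoUnicastNetwork V)
    (S : Set V) (Ri : List V) (srcOther : V) : ℕ :=
  {v | InterferesOn N S Ri srcOther v}.ncard

/-- `n_i^D` : the number of nodes of the other path `Rother` causing (direct)
interference on `Ri` in `G`. -/
noncomputable def nDirect {V : Type*} [Fintype V] (N : TwoUnicastNetwork V)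
    (Ri Rother : List V) (srcOther : V) : ℕ :=
  {v | InterferesOn N Set.univ Ri srcOther v ∧ v ∈ Rother}.ncard

/-- The pair `(R1, R2)` (paths `s1 → d1` and `s2 → d2`) has manageable
interference: there is `S ⊇ R1 ∪ R2` with `n_1(G[S]) ≠ 1` and `n_2(G[S]) ≠ 1`. -/
def Manageable {V : Type*} [Fintype V] (N : TwoUnicastNetwork V)
    (R1 R2 : List V) : Prop :=
  ∃ S : Set V, (∀ x ∈ R1, x ∈ S) ∧ (∀ x ∈ R2, x ∈ S) ∧
    nInterf N S R1 N.s2 ≠ 1 ∧ nInterf N S R2 N.s1 ≠ 1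

/-- The pair `(R1, R2)` has `(s1,d1)`-manageable interference. -/
def Manageable1 {V : Type*} [Fintype V] (N : TwoUnicastNetwork V)
    (R1 R2 : List V) : Prop :=
  ∃ S : Set V, (∀ x ∈ R1, x ∈ S) ∧ (∀ x ∈ R2, x ∈ S) ∧ nInterf N S R1 N.s2 ≠ 1

/-- The pair `(R1, R2)` has `(s2,d2)`-manageable interference. -/
def Manageable2 {V : Type*} [Fintype V] (N : TwoUnicastNetwork V)
    (R1 R2 : List V) : Prop :=
  ∃ S : Set V, (∀ x ∈ R1, x ∈ S) ∧ (∀ x ∈ R2, x ∈ S) ∧ nInterf N S R2 N.s1 ≠ 1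

/-- Removal of the vertex `v` disconnects `a` from `b` :
every path from `a` to `b` contains `v`. -/
def CutVert {V : Type*} [Fintype V] (N : TwoUnicastNetwork V) (v a b : V) : Prop :=
  ∀ p, IsPath N.E p a b → v ∈ p


/-!
Both sources reach `v_p`: `s_i` along `P_ii`, and `s_{i'}` through an interfering node and then
along `P_ii` to `d_i`, a path which passes through `v_p`. No vertex `u ≠ v_p` lies on every path
from either source to `v_p`: such a `u` would lie on `P_ii` before `v_p` and separate `s_{i'}`
from `d_i`, against the choice of `v_p`. Menger's theorem for two paths then gives `R` and `R'`.
In a layered graph it follows by rerouting: all paths from the first layer to `v_p` have the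
same length, and if two of them last meet at `x ≠ v_p`, splicing in a path that avoids `x` moves
their last meeting point to a lower layer.
-/

section Paths

variable {V : Type*} {E : V → V → Prop} {ℓ : V → ℕ} {p q : List V} {a b c d t x : V}

namespace IsPath

theorem getLast_mem (hp : IsPath E p a b) : b ∈ p :=
  List.mem_of_getLast? hp.2.2.1

theorem append (hp : IsPath E p a b) (hq : IsPath E q c d) (hbc : E b c) :
    IsPath E (p ++ q) a d := by
  obtain ⟨hp0, hpa, hpb, hpE⟩ := hp
  obtain ⟨hq0, hqc, hqd, hqE⟩ := hq
  refine ⟨by simp [hp0], by simp [List.head?_append, hpa], by simp [List.getLast?_append, hqd],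
    hpE.append hqE ?_⟩
  simp only [hpb, hqc, Option.mem_def, Option.some.injEq]
  rintro _ rfl _ rfl
  exact hbc

theorem take_idxOf [DecidableEq V] (hp : IsPath E p a b) (hx : x ∈ p) :
    IsPath E (p.take (p.idxOf x + 1)) a x := by
  obtain ⟨hp0, hpa, -, hpE⟩ := hp
  refine ⟨by simp [hp0], by simp [List.head?_take, hpa], ?_, hpE.take _⟩
  simp [List.getLast?_take, List.getElem?_idxOf hx]

theorem drop_idxOf [DecidableEq V] (hp : IsPath E p a b) (hx : x ∈ p) :
    IsPath E (p.drop (p.idxOf x)) x b := by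
  obtain ⟨-, -, hpb, hpE⟩ := hp
  have hlt := List.idxOf_lt_length_of_mem hx
  refine ⟨by simp; omega, by simp [List.getElem?_idxOf hx], ?_, hpE.drop _⟩
  simp [List.getLast?_drop, hpb, Nat.not_le.2 hlt]

theorem reaches_of_mem [DecidableEq V] (hp : IsPath E p a b) (hx : x ∈ p) : Reaches E a x :=
  ⟨_, hp.take_idxOf hx⟩

end IsPath

theorem idxOf_lt_of_mem_take [DecidableEq V] {l : List V} {n : ℕ} (hx : x ∈ l.take n) :
    l.idxOf x < n := by
  have h := List.idxOf_append_of_mem (l₂ := l.drop n) hx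
  rw [List.take_append_drop] at h
  rw [h]
  exact (List.idxOf_lt_length_of_mem hx).trans_le (List.length_take_le _ _)

/-- A path with exactly `L` vertices `f 0, …, f (L - 1)`. In a graded graph all paths between
two given vertices have the same length, so such paths can be compared and spliced index-wise. -/
structure IsPathFn (E : V → V → Prop) (L : ℕ) (f : ℕ → V) (a b : V) : Prop where
  head : f 0 = a
  last : f (L - 1) = b
  rel : ∀ j, j + 1 < L → E (f j) (f (j + 1))

theorem IsPath.isPathFn (hp : IsPath E p a b) :
    IsPathFn E p.length (fun j => p.getD j a) a b where
  head := by simp [List.getD_eq_getElem?_getD, ← List.head?_eq_getElem?, hp.2.1]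
  last := by simp [List.getD_eq_getElem?_getD, ← List.getLast?_eq_getElem?, hp.2.2.1]
  rel j hj := by
    show E (p.getD j a) (p.getD (j + 1) a)
    rw [List.getD_eq_getElem _ _ hj, List.getD_eq_getElem _ _ (Nat.lt_of_succ_lt hj)]
    exact List.isChain_iff_getElem.1 hp.2.2.2 j hj

namespace IsPathFn

variable {L k : ℕ} {f g : ℕ → V}

theorem isPath (hL : 0 < L) (hf : IsPathFn E L f a b) : IsPath E ((List.range L).map f) a b := by
  refine ⟨by simpa using hL.ne', ?_, ?_, ?_⟩
  · simp [List.head?_range, hL.ne', hf.head]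
  · simp [List.getLast?_range, hL.ne', hf.last]
  · refine List.isChain_iff_getElem.2 fun j hj => ?_
    simpa using hf.rel j (by simpa using hj)

theorem grade (hℓ : ∀ u w, E u w → ℓ w = ℓ u + 1) (hf : IsPathFn E L f a b) :
    ∀ j < L, ℓ (f j) = ℓ a + j
  | 0, _ => by simp [hf.head]
  | j + 1, hj => by rw [hℓ _ _ (hf.rel j hj), hf.grade hℓ j (by omega), Nat.add_assoc]

theorem splice (hf : IsPathFn E L f a b) (hg : IsPathFn E L g c d) (hk : 0 < k) (hkL : k < L)
    (hfg : f k = g k) : IsPathFn E L (fun j => if j < k then f j else g j) a d where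
  head := by simp [hk, hf.head]
  last := by simp [show ¬L - 1 < k by omega, hg.last]
  rel j hj := by
    rcases lt_trichotomy (j + 1) k with h | rfl | h
    · simpa [h, show j < k by omega] using hf.rel j (by omega)
    · simpa [← hfg] using hf.rel j hj
    · simpa [show ¬j < k by omega, show ¬j + 1 < k by omega] using hg.rel j hj

end IsPathFn

theorem IsPath.length_add_grade (hℓ : ∀ u w, E u w → ℓ w = ℓ u + 1) (hp : IsPath E p a b) :
    p.length + ℓ a = ℓ b + 1 := by
  have hlen : 0 < p.length := List.length_pos_iff.2 hp.1
  have h := hp.isPathFn.grade hℓ (p.length - 1) (by omega)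
  rw [hp.isPathFn.last] at h
  omega

/-- The last index `L - 1` is not counted, so `CollisionsBelow L 0 P Q` says that `P` and `Q`
meet at no index before their common end. -/
def CollisionsBelow (L n : ℕ) (P Q : ℕ → V) : Prop :=
  ∀ j, j + 1 < L → P j = Q j → j < n

theorem CollisionsBelow.symm {L n : ℕ} {P Q : ℕ → V} (h : CollisionsBelow L n P Q) :
    CollisionsBelow L n Q P :=
  fun j hj hQP => h j hj hQP.symm

section Reroute

variable {L m : ℕ} {P Q P' : ℕ → V}

/-- If the last collision of `P` and `Q` is at `x = P m`, a path `P'` avoiding `x` is spliced in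
up to the first index `k > m` where it rejoins `P` or `Q`; if it rejoins `Q`, then `Q` takes over
the end of `P` from `x` on. -/
theorem exists_reroute (hP : IsPathFn E L P a t) (hQ : IsPathFn E L Q b t)
    (hPQ : CollisionsBelow L (m + 1) P Q) (hmL : m + 1 < L) (hm : P m = Q m)
    (hP' : IsPathFn E L P' a t) (hP'm : ∀ j < L, P' j ≠ P m) :
    ∃ P₁ Q₁, IsPathFn E L P₁ a t ∧ IsPathFn E L Q₁ b t ∧ CollisionsBelow L m P₁ Q₁ := by
  classical
  have hrejoin : ∃ k, m < k ∧ k < L ∧ (P' k = P k ∨ P' k = Q k) :=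
    ⟨L - 1, by omega, by omega, .inl (hP'.last.trans hP.last.symm)⟩
  obtain ⟨hmk, hkL, hk⟩ := Nat.find_spec hrejoin
  set k := Nat.find hrejoin
  have hfree : ∀ j, m ≤ j → j < k → P' j ≠ P j ∧ P' j ≠ Q j := by
    intro j hmj hjk
    rcases hmj.eq_or_lt with rfl | hmj
    · exact ⟨hP'm _ (by omega), hm ▸ hP'm _ (by omega)⟩
    · simpa [hmj, show j < L by omega] using Nat.find_min hrejoin hjk
  have hm0 : 0 < m := by
    by_contra! h
    exact (hfree 0 h (by omega)).1 (hP'.head.trans hP.head.symm)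
  rcases hk with hk | hk
  · refine ⟨_, Q, hP'.splice hP (by omega) hkL hk, hQ, fun j hj hj₁ => ?_⟩
    by_contra! hmj
    by_cases hjk : j < k
    · exact (hfree j hmj hjk).2 (by simpa [hjk] using hj₁)
    · have := hPQ j hj (by simpa [hjk] using hj₁)
      omega
  · refine ⟨_, _, hP'.splice hQ (by omega) hkL hk, hQ.splice hP hm0 (by omega) hm.symm,
      fun j hj hj₁ => ?_⟩
    by_contra! hmj
    simp only [Nat.not_lt.2 hmj, if_false] at hj₁
    by_cases hjk : j < k
    · exact (hfree j hmj hjk).1 (by simpa [hjk] using hj₁)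
    · have := hPQ j hj (by simpa [hjk] using hj₁.symm)
      omega

end Reroute

theorem exists_collisionsBelow_zero (hℓ : ∀ u w, E u w → ℓ w = ℓ u + 1) {L : ℕ}
    (hcut : ∀ x, x ≠ t → (∃ P', IsPathFn E L P' a t ∧ ∀ j < L, P' j ≠ x) ∨
      (∃ Q', IsPathFn E L Q' b t ∧ ∀ j < L, Q' j ≠ x)) :
    ∀ n P Q, IsPathFn E L P a t → IsPathFn E L Q b t → CollisionsBelow L n P Q →
      ∃ P₁ Q₁, IsPathFn E L P₁ a t ∧ IsPathFn E L Q₁ b t ∧ CollisionsBelow L 0 P₁ Q₁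
  | 0, P, Q, hP, hQ, hPQ => ⟨P, Q, hP, hQ, hPQ⟩
  | n + 1, P, Q, hP, hQ, hPQ => by
    by_cases hn : n + 1 < L ∧ P n = Q n
    · obtain ⟨hnL, hPQn⟩ := hn
      have hPn : P n ≠ t := by
        intro hPnt
        have h₁ := hP.grade hℓ n (by omega)
        have h₂ := hP.grade hℓ (L - 1) (by omega)
        rw [hPnt] at h₁
        rw [hP.last] at h₂
        omega
      rcases hcut (P n) hPn with ⟨P', hP', hP'n⟩ | ⟨Q', hQ', hQ'n⟩
      · obtain ⟨P₁, Q₁, hP₁, hQ₁, h₁⟩ := exists_reroute hP hQ hPQ hnL hPQn hP' hP'n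
        exact exists_collisionsBelow_zero hℓ hcut n P₁ Q₁ hP₁ hQ₁ h₁
      · obtain ⟨Q₁, P₁, hQ₁, hP₁, h₁⟩ :=
          exists_reroute hQ hP hPQ.symm hnL hPQn.symm hQ' (hPQn ▸ hQ'n)
        exact exists_collisionsBelow_zero hℓ hcut n P₁ Q₁ hP₁ hQ₁ h₁.symm
    · refine exists_collisionsBelow_zero hℓ hcut n P Q hP hQ fun j hj hPQj => ?_
      obtain rfl | hjn := (Nat.lt_succ_iff.1 (hPQ j hj hPQj)).eq_or_lt
      · exact absurd ⟨hj, hPQj⟩ hn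
      · exact hjn

theorem IsPath.exists_isPathFn (hℓ : ∀ u w, E u w → ℓ w = ℓ u + 1) (hp : IsPath E p a b) :
    ∃ f, IsPathFn E (ℓ b + 1 - ℓ a) f a b ∧ ∀ j < ℓ b + 1 - ℓ a, f j ∈ p := by
  have hlen : p.length = ℓ b + 1 - ℓ a := by have := hp.length_add_grade hℓ; omega
  refine ⟨_, hlen ▸ hp.isPathFn, fun j hj => ?_⟩
  rw [List.getD_eq_getElem _ _ (hlen ▸ hj)]
  exact List.getElem_mem _

theorem CollisionsBelow.mem_and_mem_iff (hℓ : ∀ u w, E u w → ℓ w = ℓ u + 1) {L : ℕ}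
    {P Q : ℕ → V} (hab : ℓ a = ℓ b) (hL : 0 < L) (hP : IsPathFn E L P a t)
    (hQ : IsPathFn E L Q b t) (hPQ : CollisionsBelow L 0 P Q) :
    x ∈ (List.range L).map P ∧ x ∈ (List.range L).map Q ↔ x = t := by
  refine ⟨?_, ?_⟩
  · simp only [List.mem_map, List.mem_range]
    rintro ⟨⟨i, hi, rfl⟩, ⟨j, hj, hji⟩⟩
    obtain rfl : i = j := by
      have := hP.grade hℓ i hi
      have := hQ.grade hℓ j hj
      rw [hji] at *
      omega
    by_cases hi' : i + 1 < L
    · exact absurd (hPQ i hi' hji.symm) (Nat.not_lt_zero _)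
    · rw [show i = L - 1 by omega, hP.last]
  · rintro rfl
    exact ⟨(hP.isPath hL).getLast_mem, (hQ.isPath hL).getLast_mem⟩

theorem exists_fan_of_no_cut_vertex (hℓ : ∀ u w, E u w → ℓ w = ℓ u + 1) (hab : ℓ a = ℓ b)
    (ha : Reaches E a t) (hb : Reaches E b t)
    (hcut : ∀ u, u ≠ t → (∀ p, IsPath E p a t → u ∈ p) → (∀ q, IsPath E q b t → u ∈ q) → False) :
    ∃ P Q, IsPath E P a t ∧ IsPath E Q b t ∧ ∀ x, x ∈ P ∧ x ∈ Q ↔ x = t := by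
  set L := ℓ t + 1 - ℓ a with hLdef
  have hL : 0 < L := by
    obtain ⟨p, hp⟩ := ha
    have := hp.length_add_grade hℓ
    have := List.length_pos_iff.2 hp.1
    omega
  have fn_of_b : ∀ {q}, IsPath E q b t → ∃ f, IsPathFn E L f b t ∧ ∀ j < L, f j ∈ q :=
    fun hq => by rw [hLdef, hab]; exact hq.exists_isPathFn hℓ
  obtain ⟨P, hP, -⟩ := ha.choose_spec.exists_isPathFn hℓ
  obtain ⟨Q, hQ, -⟩ := fn_of_b hb.choose_spec
  have hcutFn : ∀ x, x ≠ t → (∃ P', IsPathFn E L P' a t ∧ ∀ j < L, P' j ≠ x) ∨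
      (∃ Q', IsPathFn E L Q' b t ∧ ∀ j < L, Q' j ≠ x) := by
    intro x hx
    by_contra! hmeet
    refine hcut x hx (fun p hp => ?_) (fun q hq => ?_)
    · obtain ⟨f, hf, hfp⟩ := hp.exists_isPathFn hℓ
      obtain ⟨j, hj, rfl⟩ := hmeet.1 f hf
      exact hfp j hj
    · obtain ⟨f, hf, hfq⟩ := fn_of_b hq
      obtain ⟨j, hj, rfl⟩ := hmeet.2 f hf
      exact hfq j hj
  obtain ⟨P₁, Q₁, hP₁, hQ₁, hdisj⟩ :=
    exists_collisionsBelow_zero hℓ hcutFn L P Q hP hQ fun j hj _ => by omega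
  exact ⟨_, _, hP₁.isPath hL, hQ₁.isPath hL, fun x => hdisj.mem_and_mem_iff hℓ hab hL hP₁ hQ₁⟩

theorem exists_fan_to_first_cut [DecidableEq V] (hℓ : ∀ u w, E u w → ℓ w = ℓ u + 1)
    {si di so v w vp : V} {Pii : List V} (hs : ℓ si = ℓ so)
    (hPii : IsPath E Pii si di) (hq : IsPath E q so v) (hvw : E v w) (hw : w ∈ Pii)
    (hvp : vp ∈ Pii) (hvpcut : ∀ p, IsPath E p so di → vp ∈ p)
    (hvpfirst : ∀ u ∈ Pii, (∀ p, IsPath E p so di → u ∈ p) → Pii.idxOf vp ≤ Pii.idxOf u) :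
    ∃ R R', IsPath E R si vp ∧ IsPath E R' so vp ∧ ∀ x, x ∈ R ∧ x ∈ R' ↔ x = vp := by
  have hdetour := hq.append (hPii.drop_idxOf hw) hvw
  refine exists_fan_of_no_cut_vertex hℓ hs (hPii.reaches_of_mem hvp)
    (hdetour.reaches_of_mem (hvpcut _ hdetour)) fun u hu hsi hso => hu ?_
  have huPre := hsi _ (hPii.take_idxOf hvp)
  have huPii : u ∈ Pii := List.mem_of_mem_take huPre
  have hucut : ∀ p, IsPath E p so di → u ∈ p := fun p hp =>
    List.mem_of_mem_take (hso _ (hp.take_idxOf (hvpcut p hp)))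
  have hle : Pii.idxOf u ≤ Pii.idxOf vp := Nat.lt_succ_iff.1 (idxOf_lt_of_mem_take huPre)
  exact (List.idxOf_inj huPii).1 (hle.antisymm (hvpfirst u huPii hucut))

end Paths

theorem statement0_general {V : Type*} [Fintype V] [DecidableEq V]
    (N : TwoUnicastNetwork V) (P11 P22 : List V)
    (hP11 : IsPath N.E P11 N.s1 N.d1)
    (hP22 : IsPath N.E P22 N.s2 N.d2)
    (si di soi : V) (Pii : List V)
    (hi : (si = N.s1 ∧ di = N.d1 ∧ soi = N.s2 ∧ Pii = P11) ∨
          (si = N.s2 ∧ di = N.d2 ∧ soi = N.s1 ∧ Pii = P22))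
    (hn : 2 ≤ nInterf N Set.univ Pii soi)
    (vp : V)
    (hvpPii : vp ∈ Pii)
    (hvpcut : ∀ p : List V, IsPath N.E p soi di → vp ∈ p)
    (hvpfirst : ∀ u ∈ Pii, (∀ p : List V, IsPath N.E p soi di → u ∈ p) →
      Pii.idxOf vp ≤ Pii.idxOf u) :
    ∃ R R' : List V, IsPath N.E R N.s1 vp ∧ IsPath N.E R' N.s2 vp ∧
      ∀ x : V, (x ∈ R ∧ x ∈ R') ↔ x = vp := by
  obtain ⟨v, -, -, ⟨w, hw, -, hvw⟩, q, hq, -, -⟩ : ∃ v, InterferesOn N Set.univ Pii soi v :=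
    Set.nonempty_of_ncard_ne_zero (show nInterf N Set.univ Pii soi ≠ 0 by omega)
  have hs : N.layer N.s1 = N.layer N.s2 :=
    ((N.first_layer _).2 (.inl rfl)).trans ((N.first_layer _).2 (.inr rfl)).symm
  rcases hi with ⟨rfl, rfl, rfl, rfl⟩ | ⟨rfl, rfl, rfl, rfl⟩
  · exact exists_fan_to_first_cut N.edge_layer hs hP11 hq hvw hw hvpPii hvpcut hvpfirst
  · obtain ⟨R', R, hR', hR, hRR'⟩ :=
      exists_fan_to_first_cut N.edge_layer hs.symm hP22 hq hvw hw hvpPii hvpcut hvpfirst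
    exact ⟨R, R', hR, hR', fun x => and_comm.trans (hRR' x)⟩

theorem statement0 {V : Type*} [Fintype V] [DecidableEq V]
    (N : TwoUnicastNetwork V) (P11 P22 : List V)
    (hP11 : IsPath N.E P11 N.s1 N.d1)
    (hP22 : IsPath N.E P22 N.s2 N.d2)
    (hdisj : P11.Disjoint P22)
    (si di soi : V) (Pii : List V)
    (hi : (si = N.s1 ∧ di = N.d1 ∧ soi = N.s2 ∧ Pii = P11) ∨
          (si = N.s2 ∧ di = N.d2 ∧ soi = N.s1 ∧ Pii = P22))
    (hn : 2 ≤ nInterf N Set.univ Pii soi)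
    (vp : V)
    (hvpPii : vp ∈ Pii)
    (hvpcut : ∀ p : List V, IsPath N.E p soi di → vp ∈ p)
    (hvpfirst : ∀ u ∈ Pii, (∀ p : List V, IsPath N.E p soi di → u ∈ p) →
      Pii.idxOf vp ≤ Pii.idxOf u) :
    ∃ R R' : List V, IsPath N.E R N.s1 vp ∧ IsPath N.E R' N.s2 vp ∧
      ∀ x : V, (x ∈ R ∧ x ∈ R') ↔ x = vp :=
  statement0_general N P11 P22 hP11 hP22 si di soi Pii hi hn vp hvpPii hvpcut hvpfirst
end

section
/- Under the Case-C1 setup, every path from s_1 to d_2 contains both v_2 and v_0. -/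
open List

/-! Every path from `s₁` to `d₂` must enter `P₂₂`, and it does so through an edge `(a, b)` with
`b ∈ P₂₂`. The part of the path before `b` witnesses that `a` interferes on `P₂₂`; as `v₂` is the
only node doing so, `a = v₂`, and then `b = v₀` because `(v₂, v₀)` is the only edge from `v₂`
into `P₂₂`. The path cannot start inside `P₂₂` since `s₁ ≠ s₂` are both on the first layer and
layers increase strictly along a path. -/

section Paths

variable {V : Type*} {E : V → V → Prop} {p : List V} {a u w : V}

lemma IsPath.getLast_mem_s3 (hp : IsPath E p u w) : w ∈ p :=
  List.mem_of_getLast? hp.2.2.1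

lemma IsPath.cons (hp : IsPath E p u w) (hau : E a u) : IsPath E (a :: p) a w := by
  obtain ⟨hne, hhead, hlast, hchain⟩ := hp
  refine ⟨List.cons_ne_nil _ _, rfl, ?_, hchain.cons ?_⟩
  · rwa [List.getLast?_cons_of_ne_nil hne]
  · simpa [hhead] using hau

lemma isPath_singleton_iff : IsPath E [a] u w ↔ a = u ∧ a = w :=
  ⟨fun h => ⟨Option.some.inj h.2.1, Option.some.inj h.2.2.1⟩,
    fun ⟨hu, hw⟩ => ⟨List.cons_ne_nil _ _, hu ▸ rfl, hw ▸ rfl, List.isChain_singleton a⟩⟩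

lemma isPath_cons_cons_iff {b : V} :
    IsPath E (a :: b :: p) u w ↔ a = u ∧ E a b ∧ IsPath E (b :: p) b w := by
  constructor
  · rintro ⟨-, hhead, hlast, hchain⟩
    obtain ⟨hab, hchain⟩ := List.isChain_cons_cons.mp hchain
    exact ⟨Option.some.inj hhead, hab, List.cons_ne_nil _ _, rfl, hlast, hchain⟩
  · rintro ⟨rfl, hab, -, -, hlast, hchain⟩
    exact ⟨List.cons_ne_nil _ _, rfl, hlast, List.isChain_cons_cons.mpr ⟨hab, hchain⟩⟩

lemma IsPath.exists_edge_into (T : Set V) (hp : IsPath E p u w) (hu : u ∉ T) (hw : w ∈ T) :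
    ∃ a ∈ p, ∃ b ∈ p, E a b ∧ b ∈ T ∧ ∃ q, IsPath E q u a ∧ ∀ x ∈ q, x ∉ T := by
  induction p generalizing u with
  | nil => exact absurd rfl hp.1
  | cons c t ih =>
    rcases t with _ | ⟨b, t⟩
    · obtain ⟨rfl, rfl⟩ := isPath_singleton_iff.mp hp
      exact absurd hw hu
    obtain ⟨rfl, hcb, hbt⟩ := isPath_cons_cons_iff.mp hp
    by_cases hb : b ∈ T
    · exact ⟨c, List.mem_cons_self .., b, by simp, hcb, hb, [c],
        isPath_singleton_iff.mpr ⟨rfl, rfl⟩, by simpa using hu⟩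
    obtain ⟨a, ha, b', hb', hab', hb'T, q, hq, hqT⟩ := ih hbt hb
    refine ⟨a, List.mem_cons_of_mem _ ha, b', List.mem_cons_of_mem _ hb', hab', hb'T,
      c :: q, hq.cons hcb, ?_⟩
    simpa [hu] using hqT

end Paths

namespace TwoUnicastNetwork

variable {V : Type*} [Fintype V] (N : TwoUnicastNetwork V)

lemma layer_lt_of_isChain {l : List V} {u x : V} (hl : (u :: l).IsChain N.E) (hx : x ∈ l) :
    N.layer u < N.layer x := by
  induction l generalizing u with
  | nil => cases hx
  | cons b t ih =>
    obtain ⟨hub, hbt⟩ := List.isChain_cons_cons.mp hl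
    have hlayer := N.edge_layer u b hub
    rcases List.mem_cons.mp hx with rfl | hx
    · omega
    · have := ih hbt hx
      omega

lemma s1_notMem_of_isPath_s2 {p : List V} {w : V} (hp : IsPath N.E p N.s2 w) : N.s1 ∉ p := by
  obtain ⟨hne, hhead, -, hchain⟩ := hp
  obtain ⟨t, rfl⟩ : ∃ t, p = N.s2 :: t := by
    rcases p with _ | ⟨c, t⟩
    · exact absurd rfl hne
    · exact ⟨t, by simpa using hhead⟩
  have h1 := (N.first_layer N.s1).mpr (Or.inl rfl)
  have h2 := (N.first_layer N.s2).mpr (Or.inr rfl)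
  intro hmem
  rcases List.mem_cons.mp hmem with hs | hmem
  · exact N.s_ne hs
  · have := N.layer_lt_of_isChain hchain hmem
    omega

lemma exists_interferesOn_of_isPath (R : List V) {p : List V} {s w : V}
    (hp : IsPath N.E p s w) (hs : s ∉ R) (hw : w ∈ R) :
    ∃ a ∈ p, ∃ b ∈ p, b ∈ R ∧ N.E a b ∧ InterferesOn N Set.univ R s a := by
  obtain ⟨a, ha, b, hb, hab, hbR, q, hq, hqR⟩ := hp.exists_edge_into {x | x ∈ R} hs hw
  exact ⟨a, ha, b, hb, hbR, hab, Set.mem_univ a, hqR a hq.getLast_mem_s3,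
    ⟨b, hbR, Set.mem_univ b, hab⟩, q, hq, fun x _ => Set.mem_univ x, hqR⟩

end TwoUnicastNetwork

theorem statement3_general {V : Type*} [Fintype V]
    (N : TwoUnicastNetwork V)
    (P22 : List V)
    (v0 v2 : V)
    (hP22 : IsPath N.E P22 N.s2 N.d2)
    (hv2unique : {v | InterferesOn N Set.univ P22 N.s1 v} = {v2})
    (hv2v0unique : ∀ w ∈ P22, N.E v2 w → w = v0) :
    ∀ p : List V, IsPath N.E p N.s1 N.d2 → v2 ∈ p ∧ v0 ∈ p := by
  intro p hp
  obtain ⟨a, ha, b, hb, hbP22, hab, ha_int⟩ := N.exists_interferesOn_of_isPath P22 hp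
    (N.s1_notMem_of_isPath_s2 hP22) hP22.getLast_mem_s3
  have ha_v2 : a = v2 := Set.mem_singleton_iff.mp (hv2unique ▸ ha_int)
  subst ha_v2
  exact ⟨ha, hv2v0unique b hbP22 hab ▸ hb⟩

theorem statement3 {V : Type*} [Fintype V] [DecidableEq V]
    (N : TwoUnicastNetwork V)
    (P11 P22 Ps2v1 Pvmv1 Ps1v2 : List V)
    (v0 v1 v2 v3 v4 v5 v6 vm : V)
    (hP11 : IsPath N.E P11 N.s1 N.d1)
    (hP22 : IsPath N.E P22 N.s2 N.d2)
    (hdisj : P11.Disjoint P22)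
    (hNoMan : ∀ R1 R2 : List V, IsPath N.E R1 N.s1 N.d1 → IsPath N.E R2 N.s2 N.d2 →
      R1.Disjoint R2 → ¬ Manageable N R1 R2)
    (hn1 : 2 ≤ nInterf N Set.univ P11 N.s2)
    (hn1D : nDirect N P11 P22 N.s2 = 1)
    (hn2 : nInterf N Set.univ P22 N.s1 = 1)
    (hn2D : nDirect N P22 P11 N.s1 = 0)
    (hv3P22 : v3 ∈ P22)
    (hv3unique : {v | InterferesOn N Set.univ P11 N.s2 v ∧ v ∈ P22} = {v3})
    (hv4P11 : v4 ∈ P11)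
    (hv3v4 : N.E v3 v4)
    (hv3v4unique : ∀ w ∈ P11, N.E v3 w → w = v4)
    (hv1P11 : v1 ∉ P11)
    (hv1P22 : v1 ∉ P22)
    (hv1int : InterferesOn N Set.univ P11 N.s2 v1)
    (hPs2v1 : IsPath N.E Ps2v1 N.s2 v1)
    (hPs2v1disj : Ps2v1.Disjoint P11)
    (hvmP22 : vm ∈ P22)
    (hvmPs2v1 : vm ∈ Ps2v1)
    (hvmlast : ∀ x ∈ Ps2v1, x ∈ P22 → Ps2v1.idxOf x ≤ Ps2v1.idxOf vm)
    (hPvmv1 : IsPath N.E Pvmv1 vm v1)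
    (hPvmv1suffix : Pvmv1 <:+ Ps2v1)
    (hv2Pvmv1 : v2 ∈ Pvmv1)
    (hv2ne : v2 ≠ vm)
    (hv2unique : {v | InterferesOn N Set.univ P22 N.s1 v} = {v2})
    (hv0P22 : v0 ∈ P22)
    (hv2v0 : N.E v2 v0)
    (hv2v0unique : ∀ w ∈ P22, N.E v2 w → w = v0)
    (hPs1v2 : IsPath N.E Ps1v2 N.s1 v2)
    (hPs1v2sub : ∀ x ∈ Ps1v2, x ∈ P11 ∨ x ∈ P22 ∨ x ∈ Pvmv1)
    (hv5P11 : v5 ∈ P11)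
    (hv5mem : v5 ∈ Ps1v2)
    (hv5last : ∀ x ∈ Ps1v2, x ∈ P11 → Ps1v2.idxOf x ≤ Ps1v2.idxOf v5)
    (hv6succ : ∃ k : ℕ, Ps1v2[k]? = some v5 ∧ Ps1v2[k+1]? = some v6) :
    ∀ p : List V, IsPath N.E p N.s1 N.d2 → v2 ∈ p ∧ v0 ∈ p :=
  statement3_general N P22 v0 v2 hP22 hv2unique hv2v0unique
end

section
/- Under the Case-C2 setup, every path from s_2 to d_1 contains both v_2 and v_1. -/
open List

/-!
A path from `s₂` to `d₁` starts off `P₁₁` (sources only occur at the start of a path) and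
ends on it, so the vertex just before its first entry into `P₁₁` causes interference on
`P₁₁`. That vertex must be `v₂`, and the edge by which it enters `P₁₁` leaves `P₂₂`, so it
is `(v₂, v₁)`.
-/

namespace IsPath

variable {V : Type*} {E : V → V → Prop}

theorem singleton (a : V) : IsPath E [a] a a :=
  ⟨List.cons_ne_nil _ _, rfl, rfl, List.isChain_singleton a⟩

theorem cons_cons_iff {a b u w : V} {t : List V} :
    IsPath E (a :: b :: t) u w ↔ a = u ∧ E a b ∧ IsPath E (b :: t) b w := by
  refine ⟨fun ⟨_, hu, hw, hc⟩ => ?_, fun ⟨hu, hab, _, _, hw, hc⟩ =>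
    ⟨List.cons_ne_nil _ _, by simp [hu], by simpa using hw, List.isChain_cons_cons.2 ⟨hab, hc⟩⟩⟩
  obtain ⟨hab, hc⟩ := List.isChain_cons_cons.1 hc
  exact ⟨by simpa using hu, hab, List.cons_ne_nil _ _, rfl, by simpa using hw, hc⟩

theorem cons_s10 {p : List V} {a u w : V} (ha : E a u) (hp : IsPath E p u w) :
    IsPath E (a :: p) a w := by
  obtain ⟨b, t, rfl⟩ := List.exists_cons_of_ne_nil hp.1
  obtain rfl : b = u := by simpa using hp.2.1
  exact cons_cons_iff.2 ⟨rfl, ha, hp⟩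

theorem getLast_mem_s10 {p : List V} {u w : V} (hp : IsPath E p u w) : w ∈ p :=
  List.mem_of_getLast? hp.2.2.1

theorem eq_or_exists_edge_of_mem :
    ∀ {p : List V} {u w x : V}, IsPath E p u w → x ∈ p → x = u ∨ ∃ y ∈ p, E y x
  | [], _, _, _, hp, _ => (hp.1 rfl).elim
  | [_], _, _, _, hp, hx => by
    simp only [List.mem_singleton] at hx
    exact .inl (hx.trans (by simpa using hp.2.1))
  | a :: b :: t, _, _, _, hp, hx => by
    obtain ⟨rfl, hab, hbt⟩ := cons_cons_iff.1 hp
    rcases List.mem_cons.1 hx with rfl | hx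
    · exact .inl rfl
    rcases eq_or_exists_edge_of_mem hbt hx with rfl | ⟨y, hy, hyx⟩
    · exact .inr ⟨_, List.mem_cons_self, hab⟩
    · exact .inr ⟨y, List.mem_cons_of_mem _ hy, hyx⟩

theorem exists_edge_first_entry (T : V → Prop) :
    ∀ {p : List V} {u w : V}, IsPath E p u w → ¬ T u → T w →
      ∃ v ∈ p, ∃ x ∈ p, E v x ∧ T x ∧ ∃ q, IsPath E q u v ∧ ∀ y ∈ q, ¬ T y
  | [], _, _, hp, _, _ => (hp.1 rfl).elim
  | [_], _, _, hp, hu, hw => by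
    obtain rfl : _ = _ := by simpa using hp.2.1
    obtain rfl : _ = _ := by simpa using hp.2.2.1
    exact (hu hw).elim
  | a :: b :: t, _, _, hp, hu, hw => by
    obtain ⟨rfl, hab, hbt⟩ := cons_cons_iff.1 hp
    by_cases hb : T b
    · exact ⟨a, List.mem_cons_self, b, by simp, hab, hb, [a], singleton a, by simpa using hu⟩
    obtain ⟨v, hv, x, hx, hvx, hxT, q, hq, hqT⟩ := exists_edge_first_entry T hbt hb hw
    exact ⟨v, List.mem_cons_of_mem _ hv, x, List.mem_cons_of_mem _ hx, hvx, hxT,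
      a :: q, hq.cons_s10 hab, by simpa [hu] using hqT⟩

end IsPath

namespace TwoUnicastNetwork

variable {V : Type*} [Fintype V] (N : TwoUnicastNetwork V)

theorem notMem_of_isPath_of_layer_eq_one {p : List V} {u w s : V}
    (hp : IsPath N.E p u w) (hs : N.layer s = 1) (hsu : s ≠ u) : s ∉ p := by
  intro hsp
  rcases hp.eq_or_exists_edge_of_mem hsp with rfl | ⟨y, -, hys⟩
  · exact hsu rfl
  · have := N.edge_layer y s hys
    have := N.layer_pos y
    omega

theorem exists_interferesOn_univ_of_isPath {Ri p : List V} {s w : V}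
    (hp : IsPath N.E p s w) (hs : s ∉ Ri) (hw : w ∈ Ri) :
    ∃ v ∈ p, ∃ x ∈ p, x ∈ Ri ∧ N.E v x ∧ InterferesOn N Set.univ Ri s v := by
  obtain ⟨v, hv, x, hx, hvx, hxR, q, hq, hqR⟩ := hp.exists_edge_first_entry (· ∈ Ri) hs hw
  exact ⟨v, hv, x, hx, hxR, hvx, trivial, hqR v hq.getLast_mem_s10, ⟨x, hxR, trivial, hvx⟩,
    q, hq, fun _ _ => trivial, hqR⟩

end TwoUnicastNetwork

theorem statement10_general {V : Type*} [Fintype V]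
    (N : TwoUnicastNetwork V)
    (P11 P22 : List V)
    (v1 v2 : V)
    (hP11 : IsPath N.E P11 N.s1 N.d1)
    (hv2unique : {v | InterferesOn N Set.univ P11 N.s2 v} = {v2})
    (hv2P22 : v2 ∈ P22)
    (hedgeunique : ∀ u ∈ P22, ∀ w ∈ P11, N.E u w → u = v2 ∧ w = v1) :
    ∀ p : List V, IsPath N.E p N.s2 N.d1 → v2 ∈ p ∧ v1 ∈ p := by
  intro p hp
  have hs2 : N.s2 ∉ P11 :=
    N.notMem_of_isPath_of_layer_eq_one hP11 ((N.first_layer _).2 (.inr rfl)) N.s_ne.symm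
  obtain ⟨v, hv, x, hx, hxP11, hvx, hint⟩ :=
    N.exists_interferesOn_univ_of_isPath hp hs2 hP11.getLast_mem_s10
  obtain rfl : v = v2 := (hv2unique.subset hint : v ∈ ({v2} : Set V))
  obtain rfl : x = v1 := (hedgeunique v hv2P22 x hxP11 hvx).2
  exact ⟨hv, hx⟩

theorem statement10 {V : Type*} [Fintype V]
    (N : TwoUnicastNetwork V)
    (P11 P22 : List V)
    (v1 v2 : V)
    (hP11 : IsPath N.E P11 N.s1 N.d1)
    (hP22 : IsPath N.E P22 N.s2 N.d2)
    (hdisj : P11.Disjoint P22)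
    (hNoMan : ∀ R1 R2 : List V, IsPath N.E R1 N.s1 N.d1 → IsPath N.E R2 N.s2 N.d2 →
      R1.Disjoint R2 → ¬ Manageable N R1 R2)
    (hn1 : nInterf N Set.univ P11 N.s2 = 1)
    (hn1D : nDirect N P11 P22 N.s2 = 1)
    (hv2unique : {v | InterferesOn N Set.univ P11 N.s2 v} = {v2})
    (hv2P22 : v2 ∈ P22)
    (hv1P11 : v1 ∈ P11)
    (hv2v1 : N.E v2 v1)
    (hedgeunique : ∀ u ∈ P22, ∀ w ∈ P11, N.E u w → u = v2 ∧ w = v1) :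
    ∀ p : List V, IsPath N.E p N.s2 N.d1 → v2 ∈ p ∧ v1 ∈ p :=
  statement10_general N P11 P22 v1 v2 hP11 hv2unique hv2P22 hedgeunique
end

section
/- Under the extended Case-C2 setup, the removal of v_4 disconnects d_2 from both sources; that is, every path from s_1 to d_2 contains v_4 and every path from s_2 to d_2 contains v_4. -/
open List

/-! Every `s1 → d2` path meets `v4`. If an `s2 → d2` path `p` avoided `v4`, then `p` would be
disjoint from `Q11` and receive no edge from it, since otherwise `Q11` followed by `p` would give
an `s1 → d2` path avoiding `v4`. Nor could `p` send an edge into `Q11`: the resulting `s2 → d1`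
path passes through `v1 ∉ Q11`, so `v1 ∈ p`, and `Z11` up to `v1` followed by `p` avoids `v4`.
Without edges between them, `(Q11, p)` has no interference at all in `G[Q11 ∪ p]`, so it is
manageable, contradicting the Case-C2 assumption. -/

namespace IsPath

variable {V : Type*} {E : V → V → Prop} {q q' : List V} {u w x y : V}

theorem append_of_edge {a b : V} (h₁ : IsPath E q u a) (e : E a b) (h₂ : IsPath E q' b w) :
    IsPath E (q ++ q') u w := by
  obtain ⟨hq, hh, hl, hc⟩ := h₁
  obtain ⟨-, hh', hl', hc'⟩ := h₂
  refine ⟨by simp [hq], by rw [List.head?_append, hh]; rfl,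
    by rw [List.getLast?_append, hl']; rfl, ?_⟩
  refine List.IsChain.append hc hc' fun x hx y hy => ?_
  rw [hl, Option.mem_some_iff] at hx
  rw [hh', Option.mem_some_iff] at hy
  exact hx ▸ hy ▸ e

theorem of_append_cons {s t : List V} (h : IsPath E (s ++ x :: t) u w) :
    IsPath E (s ++ [x]) u x ∧ IsPath E (x :: t) x w := by
  obtain ⟨-, hh, hl, hc⟩ := h
  refine ⟨⟨by simp, ?_, by simp, hc.prefix (by simp)⟩, ⟨by simp, rfl, ?_, hc.suffix (by simp)⟩⟩
  · cases s <;> simpa using hh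
  · simpa [List.getLast?_append] using hl

theorem exists_prefix (h : IsPath E q u w) (hx : x ∈ q) : ∃ q₁ ⊆ q, IsPath E q₁ u x := by
  obtain ⟨s, t, rfl⟩ := List.append_of_mem hx
  exact ⟨s ++ [x], (by simp : s ++ [x] <+: s ++ x :: t).subset, (of_append_cons h).1⟩

theorem exists_suffix (h : IsPath E q u w) (hx : x ∈ q) : ∃ q₂ ⊆ q, IsPath E q₂ x w := by
  obtain ⟨s, t, rfl⟩ := List.append_of_mem hx
  exact ⟨x :: t, (List.suffix_append s (x :: t)).subset, (of_append_cons h).2⟩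

theorem exists_of_reflGen (h₁ : IsPath E q u x) (hxy : Relation.ReflGen E x y)
    (h₂ : IsPath E q' y w) : ∃ r ⊆ q ++ q', IsPath E r u w := by
  cases hxy with
  | single e => exact ⟨q ++ q', List.Subset.refl _, h₁.append_of_edge e h₂⟩
  | refl =>
    obtain ⟨hq, hh, hl, hc⟩ := h₁
    obtain ⟨hq', hh', hl', hc'⟩ := h₂
    obtain ⟨t, rfl⟩ : ∃ t, q' = x :: t := by
      cases q' with
      | nil => exact absurd rfl hq'
      | cons b t => exact ⟨t, by simpa using hh'⟩
    have hsplit := List.dropLast_append_getLast? x hl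
    refine ⟨q.dropLast ++ x :: t, ?_, ?_⟩
    · exact List.append_subset.2
        ⟨List.subset_append_of_subset_left _ (List.dropLast_subset q), List.subset_append_right _ _⟩
    · rw [← hsplit] at hh hc
      refine ⟨by simp, ?_, ?_, ?_⟩
      · simpa using hh
      · simpa [List.getLast?_append] using hl'
      · show List.IsChain E _
        simpa using List.IsChain.append_overlap hc hc' (List.cons_ne_nil x [])

theorem exists_of_mem_of_mem {a b : V} (hq : IsPath E q u a) (hx : x ∈ q)
    (hxy : Relation.ReflGen E x y) (hq' : IsPath E q' b w) (hy : y ∈ q') :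
    ∃ r ⊆ q ++ q', IsPath E r u w := by
  obtain ⟨q₁, hq₁, hp₁⟩ := hq.exists_prefix hx
  obtain ⟨q₂, hq₂, hp₂⟩ := hq'.exists_suffix hy
  obtain ⟨r, hr, hp⟩ := hp₁.exists_of_reflGen hxy hp₂
  refine ⟨r, List.Subset.trans hr (List.append_subset.2 ?_), hp⟩
  exact ⟨List.subset_append_of_subset_left _ hq₁, List.subset_append_of_subset_right _ hq₂⟩

theorem mem_or_mem_of_forall_mem {a b c : V} (hcut : ∀ r, IsPath E r u w → c ∈ r)
    (hq : IsPath E q u a) (hx : x ∈ q) (hxy : Relation.ReflGen E x y) (hq' : IsPath E q' b w)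
    (hy : y ∈ q') : c ∈ q ∨ c ∈ q' := by
  obtain ⟨r, hr, hp⟩ := exists_of_mem_of_mem hq hx hxy hq' hy
  exact List.mem_append.1 (hr (hcut r hp))

end IsPath

section Interference

variable {V : Type*} [Fintype V] (N : TwoUnicastNetwork V)

theorem nInterf_eq_zero_of_forall_not_edge {S : Set V} {R : List V} (src : V)
    (h : ∀ a ∈ S, a ∉ R → ∀ b ∈ R, ¬ N.E a b) : nInterf N S R src = 0 := by
  rw [nInterf, Set.ncard_eq_zero]
  exact Set.eq_empty_of_forall_notMem fun v ⟨hvS, hvR, ⟨w, hwR, _, e⟩, _⟩ => h v hvS hvR w hwR e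

theorem manageable_of_forall_not_edge {R1 R2 : List V} (h12 : ∀ a ∈ R1, ∀ b ∈ R2, ¬ N.E a b)
    (h21 : ∀ a ∈ R2, ∀ b ∈ R1, ¬ N.E a b) : Manageable N R1 R2 := by
  refine ⟨{x | x ∈ R1 ∨ x ∈ R2}, fun x => .inl, fun x => .inr, ?_, ?_⟩
  · refine (nInterf_eq_zero_of_forall_not_edge N _ fun a ha haR => ?_).trans_ne zero_ne_one
    exact h21 a (ha.resolve_left haR)
  · refine (nInterf_eq_zero_of_forall_not_edge N _ fun a ha haR => ?_).trans_ne zero_ne_one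
    exact h12 a (ha.resolve_right haR)

end Interference

theorem statement12_general {V : Type*} [Fintype V]
    (N : TwoUnicastNetwork V)
    (P22 : List V)
    (v1 v2 : V)
    (hNoMan : ∀ R1 R2 : List V, IsPath N.E R1 N.s1 N.d1 → IsPath N.E R2 N.s2 N.d2 →
      R1.Disjoint R2 → ¬ Manageable N R1 R2)
    (Q11 Z11 : List V)
    (v3 v4 : V)
    (hP21cut : ∀ p : List V, IsPath N.E p N.s2 N.d1 → v2 ∈ p ∧ v1 ∈ p)
    (hQ11 : IsPath N.E Q11 N.s1 N.d1)
    (hv1Q11 : v1 ∉ Q11)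
    (hQ11disj : Q11.Disjoint P22)
    (hv4P22 : v4 ∈ P22)
    (hP12cut : ∀ p : List V, IsPath N.E p N.s1 N.d2 → v3 ∈ p ∧ v4 ∈ p)
    (hZ11 : IsPath N.E Z11 N.s1 N.d1)
    (hv1Z11 : v1 ∈ Z11)
    (hZ11disj : Z11.Disjoint P22) :
    (∀ p : List V, IsPath N.E p N.s1 N.d2 → v4 ∈ p) ∧
    (∀ p : List V, IsPath N.E p N.s2 N.d2 → v4 ∈ p) := by
  have hcut4 : ∀ p, IsPath N.E p N.s1 N.d2 → v4 ∈ p := fun p hp => (hP12cut p hp).2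
  refine ⟨hcut4, fun p hp => ?_⟩
  by_contra hv4p
  have hQp : ∀ x ∈ Q11, ∀ y ∈ p, ¬ Relation.ReflGen N.E x y := fun x hx y hy hxy =>
    (IsPath.mem_or_mem_of_forall_mem hcut4 hQ11 hx hxy hp hy).elim (hQ11disj · hv4P22) hv4p
  have hpQ : ∀ a ∈ p, ∀ b ∈ Q11, ¬ N.E a b := by
    intro a ha b hb e
    have hv1p : v1 ∈ p :=
      (IsPath.mem_or_mem_of_forall_mem (fun r hr => (hP21cut r hr).2) hp ha (.single e) hQ11 hb
        ).resolve_right hv1Q11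
    exact (IsPath.mem_or_mem_of_forall_mem hcut4 hZ11 hv1Z11 .refl hp hv1p).elim
      (hZ11disj · hv4P22) hv4p
  exact hNoMan Q11 p hQ11 hp (fun x hx hx' => hQp x hx x hx' .refl)
    (manageable_of_forall_not_edge N (fun a ha b hb e => hQp a ha b hb (.single e)) hpQ)

theorem statement12 {V : Type*} [Fintype V]
    (N : TwoUnicastNetwork V)
    (P11 P22 : List V)
    (v1 v2 : V)
    (hP11 : IsPath N.E P11 N.s1 N.d1)
    (hP22 : IsPath N.E P22 N.s2 N.d2)
    (hdisj : P11.Disjoint P22)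
    (hNoMan : ∀ R1 R2 : List V, IsPath N.E R1 N.s1 N.d1 → IsPath N.E R2 N.s2 N.d2 →
      R1.Disjoint R2 → ¬ Manageable N R1 R2)
    (hn1 : nInterf N Set.univ P11 N.s2 = 1)
    (hn1D : nDirect N P11 P22 N.s2 = 1)
    (hv2unique : {v | InterferesOn N Set.univ P11 N.s2 v} = {v2})
    (hv2P22 : v2 ∈ P22)
    (hv1P11 : v1 ∈ P11)
    (hv2v1 : N.E v2 v1)
    (hedgeunique : ∀ u ∈ P22, ∀ w ∈ P11, N.E u w → u = v2 ∧ w = v1)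
    (Q11 Z11 : List V)
    (v3 v4 : V)
    (hP21cut : ∀ p : List V, IsPath N.E p N.s2 N.d1 → v2 ∈ p ∧ v1 ∈ p)
    (hQ11 : IsPath N.E Q11 N.s1 N.d1)
    (hv1Q11 : v1 ∉ Q11)
    (hQ11disj : Q11.Disjoint P22)
    (hQnoDirect : {v | InterferesOn N Set.univ Q11 N.s2 v ∧ v ∈ P22} = ∅)
    (hv3Q11 : v3 ∈ Q11)
    (hv3unique : {v | InterferesOn N Set.univ P22 N.s1 v ∧ v ∈ Q11} = {v3})
    (hv4P22 : v4 ∈ P22)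
    (hv3v4 : N.E v3 v4)
    (hv3v4unique : ∀ w ∈ P22, N.E v3 w → w = v4)
    (hP12cut : ∀ p : List V, IsPath N.E p N.s1 N.d2 → v3 ∈ p ∧ v4 ∈ p)
    (hZ11 : IsPath N.E Z11 N.s1 N.d1)
    (hv3Z11 : v3 ∉ Z11)
    (hv1Z11 : v1 ∈ Z11)
    (hZ11disj : Z11.Disjoint P22)
    (hZnoDirect : {v | InterferesOn N Set.univ P22 N.s1 v ∧ v ∈ Z11} = ∅)
    (hv2Zunique : {v | InterferesOn N Set.univ Z11 N.s2 v ∧ v ∈ P22} = {v2})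
    (hv2v1unique : ∀ w ∈ Z11, N.E v2 w → w = v1) :
    (∀ p : List V, IsPath N.E p N.s1 N.d2 → v4 ∈ p) ∧
    (∀ p : List V, IsPath N.E p N.s2 N.d2 → v4 ∈ p) :=
  statement12_general N P22 v1 v2 hNoMan Q11 Z11 v3 v4 hP21cut hQ11 hv1Q11 hQ11disj hv4P22 hP12cut
    hZ11 hv1Z11 hZ11disj
end

section
/- Under the extended Case-C2 setup, the removal of v_2 disconnects s_2 from both destinations; that is, every path from s_2 to d_1 contains v_2 and every path from s_2 to d_2 contains v_2. -/
open List

/-!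
Suppose a path `p` from `s2` to `d2` avoided `v2`. Since `v2` cuts `s2` from `d1` and lies on
neither `p` nor `Z11` (nor `Q11`), splicing `p` with `Z11` (or `Q11`) at a common vertex would give
a path `s2 ~> d1` avoiding `v2`; so `p` is disjoint from `Z11` and from `Q11`, in particular
`v3 ∉ p`. In `G[Z11 ∪ p]` there is then no interference at all: an interfering node would yield a
path `s2 ~> d1` inside `Z11 ∪ p`, which misses the cut vertex `v2`, or a path `s1 ~> d2` inside
`Z11 ∪ p`, which misses the cut vertex `v3`. Hence `(Z11, p)` has manageable interference,
a contradiction.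
-/

section Paths

variable {V : Type*} {E : V → V → Prop}

lemma IsPath.concat {q : List V} {a v w : V} (hq : IsPath E q a v) (hvw : E v w) :
    IsPath E (q ++ [w]) a w := by
  obtain ⟨hne, hhead, hlast, hchain⟩ := hq
  refine ⟨by simp, ?_, by simp, hchain.append (List.isChain_singleton w) ?_⟩
  · rw [List.head?_append_of_ne_nil _ hne, hhead]
  · simp_all

lemma IsPath.splice {l₁ l₂ m₁ m₂ : List V} {a b c d x : V}
    (hp : IsPath E (l₁ ++ x :: l₂) a b) (hq : IsPath E (m₁ ++ x :: m₂) c d) :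
    IsPath E (l₁ ++ x :: m₂) a d := by
  obtain ⟨-, hhead, -, hchain⟩ := hp
  obtain ⟨-, -, hlast, hchain'⟩ := hq
  refine ⟨by simp, ?_, ?_, List.isChain_split.mpr
    ⟨(List.isChain_split.mp hchain).1, (List.isChain_split.mp hchain').2⟩⟩
  · cases l₁ <;> simp_all
  · rwa [List.getLast?_append_cons] at hlast ⊢

end Paths

section Interference

variable {V : Type*} [Fintype V] {N : TwoUnicastNetwork V}

lemma disjoint_of_cutVert {p q : List V} {a b c d x : V} (hx : CutVert N x a d)
    (hp : IsPath N.E p a b) (hq : IsPath N.E q c d) (hxp : x ∉ p) (hxq : x ∉ q) :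
    p.Disjoint q := by
  intro y hyp hyq
  obtain ⟨l₁, l₂, rfl⟩ := List.append_of_mem hyp
  obtain ⟨m₁, m₂, rfl⟩ := List.append_of_mem hyq
  have := hx _ (hp.splice hq)
  simp_all

lemma InterferesOn.exists_path {S : Set V} {R : List V} {src v a b : V}
    (h : InterferesOn N S R src v) (hR : IsPath N.E R a b) (hRS : ∀ x ∈ R, x ∈ S) :
    ∃ r, IsPath N.E r src b ∧ ∀ x ∈ r, x ∈ S := by
  obtain ⟨-, -, ⟨w, hwR, -, hvw⟩, q, hq, hqS, -⟩ := h
  obtain ⟨m₁, m₂, rfl⟩ := List.append_of_mem hwR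
  refine ⟨q ++ w :: m₂, (hq.concat hvw).splice hR, ?_⟩
  simp only [List.mem_append, List.mem_cons]
  rintro x (hx | rfl | hx)
  · exact hqS x hx
  all_goals exact hRS _ (by simp [*])

lemma nInterf_eq_zero_of_cutVert {S : Set V} {R : List V} {src a b c : V}
    (hR : IsPath N.E R a b) (hRS : ∀ x ∈ R, x ∈ S) (hc : CutVert N c src b) (hcS : c ∉ S) :
    nInterf N S R src = 0 := by
  suffices {v | InterferesOn N S R src v} = ∅ by rw [nInterf, this, Set.ncard_empty]
  refine Set.eq_empty_of_forall_notMem fun v hv => ?_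
  obtain ⟨r, hr, hrS⟩ := InterferesOn.exists_path hv hR hRS
  exact hcS (hrS c (hc r hr))

lemma manageable_of_cutVert {R₁ R₂ : List V} {c c' : V}
    (hR₁ : IsPath N.E R₁ N.s1 N.d1) (hR₂ : IsPath N.E R₂ N.s2 N.d2)
    (hc : CutVert N c N.s2 N.d1) (hc' : CutVert N c' N.s1 N.d2)
    (hcR₁ : c ∉ R₁) (hcR₂ : c ∉ R₂) (hc'R₁ : c' ∉ R₁) (hc'R₂ : c' ∉ R₂) :
    Manageable N R₁ R₂ := by
  refine ⟨{x | x ∈ R₁ ∨ x ∈ R₂}, fun _ => Or.inl, fun _ => Or.inr, ?_, ?_⟩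
  · exact (nInterf_eq_zero_of_cutVert hR₁ (fun _ => Or.inl) hc
      (fun h => h.elim hcR₁ hcR₂)).trans_ne zero_ne_one
  · exact (nInterf_eq_zero_of_cutVert hR₂ (fun _ => Or.inr) hc'
      (fun h => h.elim hc'R₁ hc'R₂)).trans_ne zero_ne_one

end Interference

theorem statement13_general {V : Type*} [Fintype V]
    (N : TwoUnicastNetwork V)
    (P22 : List V)
    (v1 v2 : V)
    (hNoMan : ∀ R1 R2 : List V, IsPath N.E R1 N.s1 N.d1 → IsPath N.E R2 N.s2 N.d2 →
      R1.Disjoint R2 → ¬ Manageable N R1 R2)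
    (hv2P22 : v2 ∈ P22)
    (Q11 Z11 : List V)
    (v3 v4 : V)
    (hP21cut : ∀ p : List V, IsPath N.E p N.s2 N.d1 → v2 ∈ p ∧ v1 ∈ p)
    (hQ11 : IsPath N.E Q11 N.s1 N.d1)
    (hQ11disj : Q11.Disjoint P22)
    (hv3Q11 : v3 ∈ Q11)
    (hP12cut : ∀ p : List V, IsPath N.E p N.s1 N.d2 → v3 ∈ p ∧ v4 ∈ p)
    (hZ11 : IsPath N.E Z11 N.s1 N.d1)
    (hv3Z11 : v3 ∉ Z11)
    (hZ11disj : Z11.Disjoint P22) :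
    (∀ p : List V, IsPath N.E p N.s2 N.d1 → v2 ∈ p) ∧
    (∀ p : List V, IsPath N.E p N.s2 N.d2 → v2 ∈ p) := by
  have hcut21 : CutVert N v2 N.s2 N.d1 := fun r hr => (hP21cut r hr).1
  refine ⟨hcut21, fun p hp => ?_⟩
  by_contra hv2p
  have hv2Q : v2 ∉ Q11 := fun h => hQ11disj h hv2P22
  have hv2Z : v2 ∉ Z11 := fun h => hZ11disj h hv2P22
  have hv3p : v3 ∉ p := fun h => disjoint_of_cutVert hcut21 hp hQ11 hv2p hv2Q h hv3Q11
  refine hNoMan Z11 p hZ11 hp (disjoint_of_cutVert hcut21 hp hZ11 hv2p hv2Z).symm ?_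
  exact manageable_of_cutVert hZ11 hp hcut21 (fun r hr => (hP12cut r hr).1)
    hv2Z hv2p hv3Z11 hv3p

theorem statement13 {V : Type*} [Fintype V]
    (N : TwoUnicastNetwork V)
    (P11 P22 : List V)
    (v1 v2 : V)
    (hP11 : IsPath N.E P11 N.s1 N.d1)
    (hP22 : IsPath N.E P22 N.s2 N.d2)
    (hdisj : P11.Disjoint P22)
    (hNoMan : ∀ R1 R2 : List V, IsPath N.E R1 N.s1 N.d1 → IsPath N.E R2 N.s2 N.d2 →
      R1.Disjoint R2 → ¬ Manageable N R1 R2)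
    (hn1 : nInterf N Set.univ P11 N.s2 = 1)
    (hn1D : nDirect N P11 P22 N.s2 = 1)
    (hv2unique : {v | InterferesOn N Set.univ P11 N.s2 v} = {v2})
    (hv2P22 : v2 ∈ P22)
    (hv1P11 : v1 ∈ P11)
    (hv2v1 : N.E v2 v1)
    (hedgeunique : ∀ u ∈ P22, ∀ w ∈ P11, N.E u w → u = v2 ∧ w = v1)
    (Q11 Z11 : List V)
    (v3 v4 : V)
    (hP21cut : ∀ p : List V, IsPath N.E p N.s2 N.d1 → v2 ∈ p ∧ v1 ∈ p)
    (hQ11 : IsPath N.E Q11 N.s1 N.d1)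
    (hv1Q11 : v1 ∉ Q11)
    (hQ11disj : Q11.Disjoint P22)
    (hQnoDirect : {v | InterferesOn N Set.univ Q11 N.s2 v ∧ v ∈ P22} = ∅)
    (hv3Q11 : v3 ∈ Q11)
    (hv3unique : {v | InterferesOn N Set.univ P22 N.s1 v ∧ v ∈ Q11} = {v3})
    (hv4P22 : v4 ∈ P22)
    (hv3v4 : N.E v3 v4)
    (hv3v4unique : ∀ w ∈ P22, N.E v3 w → w = v4)
    (hP12cut : ∀ p : List V, IsPath N.E p N.s1 N.d2 → v3 ∈ p ∧ v4 ∈ p)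
    (hZ11 : IsPath N.E Z11 N.s1 N.d1)
    (hv3Z11 : v3 ∉ Z11)
    (hv1Z11 : v1 ∈ Z11)
    (hZ11disj : Z11.Disjoint P22)
    (hZnoDirect : {v | InterferesOn N Set.univ P22 N.s1 v ∧ v ∈ Z11} = ∅)
    (hv2Zunique : {v | InterferesOn N Set.univ Z11 N.s2 v ∧ v ∈ P22} = {v2})
    (hv2v1unique : ∀ w ∈ Z11, N.E v2 w → w = v1) :
    (∀ p : List V, IsPath N.E p N.s2 N.d1 → v2 ∈ p) ∧
    (∀ p : List V, IsPath N.E p N.s2 N.d2 → v2 ∈ p) :=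
  statement13_general N P22 v1 v2 hNoMan hv2P22 Q11 Z11 v3 v4 hP21cut hQ11 hQ11disj hv3Q11 hP12cut
    hZ11 hv3Z11 hZ11disj
end

section
/- Let G be a two-unicast layered network and let P_11 (from s_1 to d_1) and P_22 (from s_2 to d_2) be disjoint paths. Suppose the pair (P_11,P_22) does not have manageable interference but has both (s_1,d_1)-manageable and (s_2,d_2)-manageable interference. Then there is exactly one i in {1,2} such that n_i(G[V]) >= 2, n_i^D = 1, n_{i'}(G[V]) = 1 and n_{i'}^D = 0 (for the pair (P_11,P_22)). -/
open List

/-- Removal of the vertex `v` disconnects `a` from `b` :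
every path from `a` to `b` contains `v`. -/

lemma interf_mono {V : Type*} [Fintype V] (N : TwoUnicastNetwork V) {S S' : Set V}
    (h : S ⊆ S') (Ri : List V) (src : V) :
    nInterf N S Ri src ≤ nInterf N S' Ri src := by
  apply Set.ncard_le_ncard _ (Set.toFinite _)
  rintro v ⟨hvS, hv1, ⟨w, hw, hwS, hE⟩, q, hq, hqS, hqR⟩
  exact ⟨h hvS, hv1, ⟨w, hw, h hwS, hE⟩, q, hq, fun x hx => h (hqS x hx), hqR⟩

lemma path_prefix {V : Type*} (E : V → V → Prop) {p : List V} {s d v : V}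
    (hp : IsPath E p s d) (hv : v ∈ p) :
    ∃ q, IsPath E q s v ∧ ∀ x ∈ q, x ∈ p := by
  classical
  obtain ⟨hne, hhead, -, hchain⟩ := hp
  set k := p.idxOf v with hk
  have hkl : k < p.length := List.idxOf_lt_length_iff.2 hv
  refine ⟨p.take (k+1), ⟨?_, ?_, ?_, hchain.take _⟩,
    fun x hx => (List.take_sublist _ _).subset hx⟩
  · cases p with
    | nil => cases hv
    | cons a t => simp [List.take_succ_cons]
  · cases p with
    | nil => cases hv
    | cons a t => simpa [List.take_succ_cons] using hhead
  · rw [List.getLast?_eq_getElem?]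
    have hlen : (p.take (k+1)).length = k+1 := by
      simp only [List.length_take]
      omega
    rw [hlen]
    simp only [Nat.add_sub_cancel]
    rw [List.getElem?_take, if_pos (Nat.lt_succ_self k)]
    rw [List.getElem?_eq_getElem hkl]
    simp [hk, List.getElem_idxOf]

lemma nDirect_eq_aux {V : Type*} [Fintype V] (N : TwoUnicastNetwork V)
    (R1 R2 : List V) (src d : V) (hR2 : IsPath N.E R2 src d)
    (hd : R2.Disjoint R1) :
    nDirect N R1 R2 src = nInterf N {x | x ∈ R1 ∨ x ∈ R2} R1 src := by
  unfold nDirect nInterf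
  congr 1
  ext v
  constructor
  · rintro ⟨⟨-, hv1, ⟨w, hw, -, hE⟩, -⟩, hv2⟩
    obtain ⟨q, hq, hqsub⟩ := path_prefix N.E hR2 hv2
    exact ⟨Or.inr hv2, hv1, ⟨w, hw, Or.inl hw, hE⟩, q, hq,
      fun x hx => Or.inr (hqsub x hx), fun x hx => hd (hqsub x hx)⟩
  · rintro ⟨hvS, hv1, ⟨w, hw, -, hE⟩, q, hq, -, hqR⟩
    have hv2 : v ∈ R2 := (hvS : v ∈ R1 ∨ v ∈ R2).resolve_left hv1
    exact ⟨⟨Set.mem_univ v, hv1, ⟨w, hw, Set.mem_univ w, hE⟩, q, hq,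
      fun x _ => Set.mem_univ x, hqR⟩, hv2⟩

theorem statement16 {V : Type*} [Fintype V]
    (N : TwoUnicastNetwork V)
    (P11 P22 : List V)
    (hP11 : IsPath N.E P11 N.s1 N.d1)
    (hP22 : IsPath N.E P22 N.s2 N.d2)
    (hdisj : P11.Disjoint P22)
    (hNotMan : ¬ Manageable N P11 P22)
    (hMan1 : Manageable1 N P11 P22)
    (hMan2 : Manageable2 N P11 P22) :
    Xor'
      (2 ≤ nInterf N Set.univ P11 N.s2 ∧ nDirect N P11 P22 N.s2 = 1 ∧
        nInterf N Set.univ P22 N.s1 = 1 ∧ nDirect N P22 P11 N.s1 = 0)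
      (2 ≤ nInterf N Set.univ P22 N.s1 ∧ nDirect N P22 P11 N.s1 = 1 ∧
        nInterf N Set.univ P11 N.s2 = 1 ∧ nDirect N P11 P22 N.s2 = 0) := by
  classical
  have hNM : ∀ S : Set V, (∀ x ∈ P11, x ∈ S) → (∀ x ∈ P22, x ∈ S) →
      nInterf N S P11 N.s2 = 1 ∨ nInterf N S P22 N.s1 = 1 := by
    intro S hS1 hS2
    by_contra h
    push_neg at h
    exact hNotMan ⟨S, hS1, hS2, h.1, h.2⟩
  obtain ⟨S1, hS1a, hS1b, h1⟩ := hMan1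
  obtain ⟨S2, hS2a, hS2b, h2⟩ := hMan2
  have hD1 : nDirect N P11 P22 N.s2 = nInterf N {x | x ∈ P11 ∨ x ∈ P22} P11 N.s2 :=
    nDirect_eq_aux N P11 P22 N.s2 N.d2 hP22 (List.Disjoint.symm hdisj)
  have hD2 : nDirect N P22 P11 N.s1 = nInterf N {x | x ∈ P22 ∨ x ∈ P11} P22 N.s1 :=
    nDirect_eq_aux N P22 P11 N.s1 N.d1 hP11 hdisj
  have hT1S1 : {x | x ∈ P11 ∨ x ∈ P22} ⊆ S1 := fun x hx => Or.elim hx (hS1a x) (hS1b x)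
  have hT1S2 : {x | x ∈ P11 ∨ x ∈ P22} ⊆ S2 := fun x hx => Or.elim hx (hS2a x) (hS2b x)
  have hT2S1 : {x | x ∈ P22 ∨ x ∈ P11} ⊆ S1 := fun x hx => Or.elim hx (hS1b x) (hS1a x)
  have hT2S2 : {x | x ∈ P22 ∨ x ∈ P11} ⊆ S2 := fun x hx => Or.elim hx (hS2b x) (hS2a x)
  have hVcases := hNM Set.univ (fun _ _ => trivial) (fun _ _ => trivial)
  by_cases hb : nInterf N Set.univ P22 N.s1 = 1
  · -- first disjunct holds
    have h2le : nInterf N S2 P22 N.s1 ≤ 1 := by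
      have := interf_mono N (Set.subset_univ S2) P22 N.s1
      omega
    have h2z : nInterf N S2 P22 N.s1 = 0 := by omega
    have h1S2 : nInterf N S2 P11 N.s2 = 1 := (hNM S2 hS2a hS2b).resolve_right (by omega)
    have ha1 : 1 ≤ nInterf N Set.univ P11 N.s2 := by
      have := interf_mono N (Set.subset_univ S2) P11 N.s2
      omega
    have ha : nInterf N Set.univ P11 N.s2 ≠ 1 := by
      intro haeq
      have h1le : nInterf N S1 P11 N.s2 ≤ 1 := by
        have := interf_mono N (Set.subset_univ S1) P11 N.s2
        omega
      have h1z : nInterf N S1 P11 N.s2 = 0 := by omega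
      apply hNotMan
      refine ⟨S1 ∩ S2, fun x hx => ⟨hS1a x hx, hS2a x hx⟩,
        fun x hx => ⟨hS1b x hx, hS2b x hx⟩, ?_, ?_⟩
      · have := interf_mono N (Set.inter_subset_left (s := S1) (t := S2)) P11 N.s2
        omega
      · have := interf_mono N (Set.inter_subset_right (s := S1) (t := S2)) P22 N.s1
        omega
    have hD2z : nInterf N {x | x ∈ P22 ∨ x ∈ P11} P22 N.s1 = 0 := by
      have := interf_mono N hT2S2 P22 N.s1
      omega
    have hD1o : nInterf N {x | x ∈ P11 ∨ x ∈ P22} P11 N.s2 = 1 := by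
      have hcases := hNM {x | x ∈ P11 ∨ x ∈ P22} (fun x hx => Or.inl hx) (fun x hx => Or.inr hx)
      have := interf_mono N hT1S2 P22 N.s1
      omega
    left
    refine ⟨⟨by omega, by rw [hD1]; exact hD1o, hb, by rw [hD2]; exact hD2z⟩, ?_⟩
    rintro ⟨-, -, heq, -⟩
    omega
  · -- second disjunct holds
    have ha : nInterf N Set.univ P11 N.s2 = 1 := hVcases.resolve_right hb
    have h1le : nInterf N S1 P11 N.s2 ≤ 1 := by
      have := interf_mono N (Set.subset_univ S1) P11 N.s2
      omega
    have h1z : nInterf N S1 P11 N.s2 = 0 := by omega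
    have h2S1 : nInterf N S1 P22 N.s1 = 1 := (hNM S1 hS1a hS1b).resolve_left (by omega)
    have hb1 : 1 ≤ nInterf N Set.univ P22 N.s1 := by
      have := interf_mono N (Set.subset_univ S1) P22 N.s1
      omega
    have hD1z : nInterf N {x | x ∈ P11 ∨ x ∈ P22} P11 N.s2 = 0 := by
      have := interf_mono N hT1S1 P11 N.s2
      omega
    have hD2o : nInterf N {x | x ∈ P22 ∨ x ∈ P11} P22 N.s1 = 1 := by
      have hcases := hNM {x | x ∈ P22 ∨ x ∈ P11} (fun x hx => Or.inr hx) (fun x hx => Or.inl hx)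
      have := interf_mono N hT2S1 P11 N.s2
      omega
    right
    refine ⟨⟨by omega, by rw [hD2]; exact hD2o, ha, by rw [hD1]; exact hD1z⟩, ?_⟩
    rintro ⟨hge, -, -, -⟩
    omega
end

section
/- Let m >= 2 and let alpha_i(j), beta_i(k) be real numbers for i in {1,...,m} and j,k in {1,2}. For x in R^m define the 2-by-2 real matrix T(x) by T(x)_{j,k} = sum over i=1,...,m of alpha_i(j) * beta_i(k) * x_i. Assume: (a) alpha_i(1) * beta_i(2) = 0 for every i; (b) there exist indices p != q such that the 2-by-2 matrix with rows (alpha_p(1)beta_p(1), alpha_q(1)beta_q(1)) and (alpha_p(2)beta_p(1), alpha_q(2)beta_q(1)) is invertible; (c) there exist indices r != t such that the 2-by-2 matrix with rows (alpha_r(2)beta_r(1), alpha_t(2)beta_t(1)) and (alpha_r(2)beta_r(2), alpha_t(2)beta_t(2)) is invertible. Then there exists x in R^m such that T(x) is diagonal with both diagonal entries nonzero, i.e. T(x)_{1,2} = T(x)_{2,1} = 0, T(x)_{1,1} != 0 and T(x)_{2,2} != 0. -/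
lemma aux_choose (A A' B B' : ℝ) (hA : A ≠ 0) (hB : B ≠ 0) :
    ∃ c : ℝ, A + c * A' ≠ 0 ∧ B' + c * B ≠ 0 := by
  by_cases hB' : B' = 0
  · by_cases h1 : A + 1 * A' = 0
    · refine ⟨2, ?_, ?_⟩
      · intro h2
        have : A = 0 := by linarith
        exact hA this
      · simp [hB', hB]
    · exact ⟨1, h1, by simp [hB', hB]⟩
  · exact ⟨0, by simpa using hA, by simpa using hB'⟩

theorem statement18 (m : ℕ) (hm : 2 ≤ m) (α β : Fin m → Fin 2 → ℝ)
    (ha : ∀ i : Fin m, α i 0 * β i 1 = 0)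
    (hb : ∃ p q : Fin m, p ≠ q ∧
      IsUnit (!![α p 0 * β p 0, α q 0 * β q 0;
                 α p 1 * β p 0, α q 1 * β q 0] : Matrix (Fin 2) (Fin 2) ℝ))
    (hc : ∃ r t : Fin m, r ≠ t ∧
      IsUnit (!![α r 1 * β r 0, α t 1 * β t 0;
                 α r 1 * β r 1, α t 1 * β t 1] : Matrix (Fin 2) (Fin 2) ℝ)) :
    ∃ x : Fin m → ℝ,
      (∑ i : Fin m, α i 0 * β i 1 * x i) = 0 ∧
      (∑ i : Fin m, α i 1 * β i 0 * x i) = 0 ∧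
      (∑ i : Fin m, α i 0 * β i 0 * x i) ≠ 0 ∧
      (∑ i : Fin m, α i 1 * β i 1 * x i) ≠ 0 := by
  obtain ⟨p, q, hpq, hbu⟩ := hb
  obtain ⟨r, t, hrt, hcu⟩ := hc
  have hdetb : (α p 0 * β p 0) * (α q 1 * β q 0) - (α q 0 * β q 0) * (α p 1 * β p 0) ≠ 0 := by
    have := ((Matrix.isUnit_iff_isUnit_det _).mp hbu)
    rw [isUnit_iff_ne_zero] at this
    simpa [Matrix.det_fin_two_of] using this
  have hdetc : (α r 1 * β r 0) * (α t 1 * β t 1) - (α t 1 * β t 0) * (α r 1 * β r 1) ≠ 0 := by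
    have := ((Matrix.isUnit_iff_isUnit_det _).mp hcu)
    rw [isUnit_iff_ne_zero] at this
    simpa [Matrix.det_fin_two_of] using this
  set xp := α q 1 * β q 0 with hxp
  set xq := -(α p 1 * β p 0) with hxq
  set yr := α t 1 * β t 0 with hyr
  set yt := -(α r 1 * β r 0) with hyt
  set A := α p 0 * β p 0 * xp + α q 0 * β q 0 * xq with hA
  set A' := α r 0 * β r 0 * yr + α t 0 * β t 0 * yt with hA'
  set B := α r 1 * β r 1 * yr + α t 1 * β t 1 * yt with hB
  set B' := α p 1 * β p 1 * xp + α q 1 * β q 1 * xq with hB'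
  have hAne : A ≠ 0 := by
    intro h; apply hdetb; rw [hA, hxp, hxq] at h; simp only [hxp] at *; linarith
  have hBne : B ≠ 0 := by
    intro h; apply hdetc; rw [hB, hyr, hyt] at h; simp only [hyr] at *; linarith
  obtain ⟨c, hc1, hc2⟩ := aux_choose A A' B B' hAne hBne
  refine ⟨fun i => (if i = p then xp else 0) + (if i = q then xq else 0) +
      (if i = r then c * yr else 0) + (if i = t then c * yt else 0), ?_, ?_, ?_, ?_⟩
  · apply Finset.sum_eq_zero
    intro i _
    rw [ha i, zero_mul]
  · simp only [mul_add, Finset.sum_add_distrib, mul_ite, mul_zero,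
      Finset.sum_ite_eq', Finset.mem_univ, if_true]
    rw [hxp, hxq, hyr, hyt]; ring
  · have : (∑ i : Fin m, α i 0 * β i 0 * ((if i = p then xp else 0) + (if i = q then xq else 0) +
      (if i = r then c * yr else 0) + (if i = t then c * yt else 0))) = A + c * A' := by
      simp only [mul_add, Finset.sum_add_distrib, mul_ite, mul_zero,
        Finset.sum_ite_eq', Finset.mem_univ, if_true, hA, hA']
      ring
    rw [this]; exact hc1
  · have : (∑ i : Fin m, α i 1 * β i 1 * ((if i = p then xp else 0) + (if i = q then xq else 0) +
      (if i = r then c * yr else 0) + (if i = t then c * yt else 0))) = B' + c * B := by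
      simp only [mul_add, Finset.sum_add_distrib, mul_ite, mul_zero,
        Finset.sum_ite_eq', Finset.mem_univ, if_true, hB, hB']
      ring
    rw [this]; exact hc2
end

section
/- Let G=(V,E) be a finite directed graph whose vertex set is partitioned into layers with every edge going from one layer to the next (so G is acyclic and there are finitely many directed paths between any two vertices). Let R be the polynomial ring over the reals with one indeterminate X_e for each edge e in E, and for vertices u, w define h(u,w) in R as the sum, over all directed paths from u to w, of the product of the indeterminates of the edges of the path (with h(u,u) = 1 via the trivial path, and h(u,w) = 0 if there is no path from u to w). Suppose s_1, s_2, a, b are vertices such that there exist a path from s_1 to a and a path from s_2 to b that are vertex-disjoint. Then the polynomial h(s_1,a) * h(s_2,b) - h(s_1,b) * h(s_2,a) is not the zero element of R; equivalently, the determinant of the 2-by-2 transfer matrix from (s_1,s_2) to (a,b), viewed as a multivariate polynomial in the edge variables, is not identically zero. -/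
open List

/-- The monomial of a path: the product of the edge indeterminates along it
(in the polynomial ring over `ℝ` with one indeterminate per edge of `E`). -/
noncomputable def pathProd {V : Type*} (E : V → V → Prop) [DecidableRel E]
    (p : List V) : MvPolynomial {e : V × V // E e.1 e.2} ℝ :=
  ((p.zip p.tail).map (fun e =>
    if h : E e.1 e.2 then MvPolynomial.X (⟨e, h⟩ : {e : V × V // E e.1 e.2})
    else 0)).prod

/-- `h(u,w)` : the transfer polynomial from `u` to `w`, i.e. the sum over all
directed paths from `u` to `w` of the product of the edge indeterminates of the
path (`1` for the trivial path, `0` if there is no path). -/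
noncomputable def transferPoly {V : Type*} (E : V → V → Prop) [DecidableRel E]
    (u w : V) : MvPolynomial {e : V × V // E e.1 e.2} ℝ :=
  ∑ᶠ p ∈ {p : List V | IsPath E p u w}, pathProd E p

/-!
Evaluate all transfer polynomials at the 0/1 point that is `1` exactly on the steps of `P1` and
`P2`. Then `h(u, w)` becomes the number of paths from `u` to `w` using only those steps. Such a
path starting at `s1` can never leave `P1`, because leaving it would need a step of `P2` starting
on `P1`, which disjointness forbids; so `h(s1, b)` evaluates to `0`, while `h(s1, a)` and
`h(s2, b)` evaluate to positive counts (witnessed by `P1` and `P2`).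
-/

open MvPolynomial

section

variable {V : Type*} {E : V → V → Prop}

theorem List.IsChain.nodup_of_lt {α : Type*} [Preorder α] {f : V → α}
    (hf : ∀ u w, E u w → f u < f w) {p : List V} (hp : p.IsChain E) : p.Nodup := by
  have hmap : (p.map f).IsChain (· < ·) := isChain_map_of_isChain f hf hp
  exact (pairwise_map.mp (isChain_iff_pairwise.mp hmap)).imp fun h => ne_of_apply_ne f h.ne

theorem finite_setOf_isChain_of_lt [Fintype V] {α : Type*} [Preorder α] {f : V → α}
    (hf : ∀ u w, E u w → f u < f w) : {p : List V | p.IsChain E}.Finite :=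
  (finite_length_le V (Fintype.card V)).subset fun _ hp => (hp.nodup_of_lt hf).length_le_card

theorem List.IsChain.subset_left_of_steps {P Q l : List V} (hPQ : P.Disjoint Q)
    (hl : l.IsChain fun x y => [x, y] <:+: P ∨ [x, y] <:+: Q) {x : V} (hx : l.head? = some x)
    (hxP : x ∈ P) : l ⊆ P := by
  refine hl.induction (· ∈ P) _ (fun y z hyz hyP => ?_) (fun _ => ?_)
  · rcases hyz with hP | hQ
    · exact hP.subset (by simp)
    · exact absurd (hQ.subset (by simp)) (hPQ hyP)
  · obtain ⟨l', rfl⟩ := head?_eq_some_iff.mp hx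
    exact hxP

end

section

variable {V : Type*} (E : V → V → Prop) [DecidableRel E]

open Classical in
noncomputable def relIndicator (F : V → V → Prop) : {e : V × V // E e.1 e.2} → ℝ :=
  fun e => if F e.1.1 e.1.2 then 1 else 0

theorem pathProd_cons_cons (x y : V) (l : List V) :
    pathProd E (x :: y :: l) =
      (if h : E x y then X ⟨(x, y), h⟩ else 0) * pathProd E (y :: l) := by
  simp [pathProd]

open Classical in
theorem eval_relIndicator_pathProd (F : V → V → Prop) :
    ∀ {p : List V}, p.IsChain E →
      eval (relIndicator E F) (pathProd E p) = if p.IsChain F then 1 else 0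
  | [], _ => by simp [pathProd]
  | [x], _ => by simp [pathProd]
  | x :: y :: l, hp => by
    rw [isChain_cons_cons] at hp
    rw [pathProd_cons_cons, map_mul, eval_relIndicator_pathProd F hp.2, dif_pos hp.1,
      eval_X, relIndicator]
    simp only [isChain_cons_cons]
    by_cases hxy : F x y <;> simp [hxy]

theorem eval_relIndicator_transferPoly (F : V → V → Prop) {u w : V}
    (hfin : {p : List V | IsPath E p u w}.Finite) :
    eval (relIndicator E F) (transferPoly E u w) =
      {p : List V | IsPath E p u w ∧ p.IsChain F}.ncard := by
  rw [transferPoly, finsum_mem_eq_finite_toFinset_sum _ hfin, map_sum,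
    Finset.sum_congr rfl fun p hp => eval_relIndicator_pathProd E F (hfin.mem_toFinset.mp hp).2.2.2,
    Finset.sum_boole, Set.ncard_eq_toFinset_card _ (hfin.subset fun _ hp => hp.1)]
  congr 2
  ext p
  simp

end

theorem statement19 {V : Type*} [Fintype V] (E : V → V → Prop) [DecidableRel E]
    (layer : V → ℕ) (hlayer : ∀ u w : V, E u w → layer w = layer u + 1)
    (s1 s2 a b : V) (P1 P2 : List V)
    (hP1 : IsPath E P1 s1 a) (hP2 : IsPath E P2 s2 b)
    (hdisj : P1.Disjoint P2) :
    transferPoly E s1 a * transferPoly E s2 b -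
      transferPoly E s1 b * transferPoly E s2 a ≠ 0 := by
  set F : V → V → Prop := fun x y => [x, y] <:+: P1 ∨ [x, y] <:+: P2
  have hchains : {p : List V | p.IsChain E}.Finite :=
    finite_setOf_isChain_of_lt (f := layer) fun u w h => hlayer u w h ▸ Nat.lt_succ_self _
  have hfin (u w : V) : {p : List V | IsPath E p u w}.Finite :=
    hchains.subset fun _ hp => hp.2.2.2
  have hcount (u w : V) := eval_relIndicator_transferPoly E F (hfin u w)
  have hs1a : 0 < {p | IsPath E p s1 a ∧ p.IsChain F}.ncard :=
    (Set.ncard_pos ((hfin s1 a).subset fun _ hp => hp.1)).mpr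
      ⟨P1, hP1, (isChain_isInfix P1).imp fun _ _ => Or.inl⟩
  have hs2b : 0 < {p | IsPath E p s2 b ∧ p.IsChain F}.ncard :=
    (Set.ncard_pos ((hfin s2 b).subset fun _ hp => hp.1)).mpr
      ⟨P2, hP2, (isChain_isInfix P2).imp fun _ _ => Or.inr⟩
  have hs1b : {p | IsPath E p s1 b ∧ p.IsChain F} = ∅ := by
    refine Set.eq_empty_of_forall_notMem fun p ⟨hp, hpF⟩ =>
      hdisj ?_ (mem_of_mem_getLast? hP2.2.2.1)
    exact hpF.subset_left_of_steps hdisj hp.2.1 (mem_of_mem_head? hP1.2.1)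
      (mem_of_mem_getLast? hp.2.2.1)
  intro h
  have h_eval := congrArg (eval (relIndicator E F)) h
  rw [map_sub, map_mul, map_mul, map_zero, hcount, hcount, hcount, hcount, hs1b, Set.ncard_empty,
    Nat.cast_zero, zero_mul, sub_zero] at h_eval
  exact (mul_pos (Nat.cast_pos.mpr hs1a) (Nat.cast_pos.mpr hs2b)).ne' h_eval
end
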